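/- arXiv:2505.21539 — 3 statements merged into one kernel-verified Lean document; each statement's English description precedes it below -/
import Mathlib

section
/- Let G = SE(3)^N and define v_X(g) = (R_g)_{*,e} f(gX) where f(X) ∈ 𝔰𝔢(3)^N has components f_i(X) with rotation part w^i(X) ∈ ℝ³ (as a skew-symmetric matrix) and translation part t^i(X) ∈ ℝ³. If f is SO(3)-equivariant, i.e., w^i(rX) = r w^i(X) and t^i(rX) = r t^i(X) for all r ∈ SO(3) and all i, then v_X is invariant under left multiplication by the diagonal rotation r: (L_r)_{*,g} v_X(g) = v_X(rg) for all g ∈ G. -/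
/-- The cross-product (skew-symmetric) matrix of `w ∈ ℝ³`. -/
def skewMat (w : Fin 3 → ℝ) : Matrix (Fin 3) (Fin 3) ℝ :=
  !![0, -w 2, w 1; w 2, 0, -w 0; -w 1, w 0, 0]

/-- An element of `𝔰𝔢(3)` as a 4×4 matrix: skew rotation block `w_×` and translation
column `t`. -/
def se3Mat (w t : Fin 3 → ℝ) : Matrix (Fin 3 ⊕ Fin 1) (Fin 3 ⊕ Fin 1) ℝ :=
  Matrix.fromBlocks (skewMat w) (Matrix.of fun i (_ : Fin 1) => t i) 0 0

/-- A rotation `r ∈ SO(3)` embedded as a 4×4 rigid-motion matrix `(r, 0)`. -/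
def rotMat (r : Matrix (Fin 3) (Fin 3) ℝ) : Matrix (Fin 3 ⊕ Fin 1) (Fin 3 ⊕ Fin 1) ℝ :=
  Matrix.fromBlocks r 0 0 1

lemma skew_key (A : Matrix (Fin 3) (Fin 3) ℝ) (w : Fin 3 → ℝ) :
    A.transpose * skewMat (A.mulVec w) * A = A.det • skewMat w := by
  ext i j
  fin_cases i <;> fin_cases j <;>
    simp [skewMat, Matrix.mul_apply, Matrix.mulVec, dotProduct,
      Fin.sum_univ_succ, Matrix.det_fin_three, Matrix.transpose_apply, Matrix.smul_apply] <;>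
    ring

lemma skew_rot (r : Matrix (Fin 3) (Fin 3) ℝ) (horth : r * r.transpose = 1)
    (hdet : r.det = 1) (w : Fin 3 → ℝ) :
    skewMat (r.mulVec w) * r = r * skewMat w := by
  have h2 : r.transpose * r = 1 := mul_eq_one_comm.mp horth
  have := skew_key r w
  calc skewMat (r.mulVec w) * r
      = (r * r.transpose) * skewMat (r.mulVec w) * r := by rw [horth]; simp [Matrix.one_mul]
    _ = r * (r.transpose * skewMat (r.mulVec w) * r) := by noncomm_ring
    _ = r * skewMat w := by rw [this, hdet, one_smul]

lemma rot_se3 (r : Matrix (Fin 3) (Fin 3) ℝ) (horth : r * r.transpose = 1)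
    (hdet : r.det = 1) (w t : Fin 3 → ℝ) :
    rotMat r * se3Mat w t = se3Mat (r.mulVec w) (r.mulVec t) * rotMat r := by
  have hcol : r * (Matrix.of fun i (_ : Fin 1) => t i) =
      Matrix.of fun i (_ : Fin 1) => r.mulVec t i := by
    ext i j
    simp [Matrix.mul_apply, Matrix.mulVec, dotProduct]
  simp only [rotMat, se3Mat, Matrix.fromBlocks_multiply]
  rw [skew_rot r horth hdet w]
  simp [hcol]

/-- Let `G = SE(3)^N` and `v_X(g) = (R_g)_{*,e} f(gX)`, i.e. in matrix form
`v X g i = f (g • X) i * g i`, where `f X i = se3Mat (w X i) (t X i)` has rotation part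
`w X i` and translation part `t X i`.  If `f` is SO(3)-equivariant, i.e.
`w (r X) i = r (w X i)` and `t (r X) i = r (t X i)` (with `r` acting diagonally on `X`),
then `v_X` is invariant under left multiplication by the diagonal rotation `r`:
`(L_r)_{*,g} (v X g) = v X (fun i => rotMat r * g i) i`. -/
theorem left_rot_invariant_of_SO3_equivariant
    {N : ℕ} {PC : Type*}
    (act : (Fin N → Matrix (Fin 3 ⊕ Fin 1) (Fin 3 ⊕ Fin 1) ℝ) → PC → PC)
    (hact : ∀ g h X, act (fun i => g i * h i) X = act g (act h X))
    (w t : PC → Fin N → Fin 3 → ℝ)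
    (f : PC → Fin N → Matrix (Fin 3 ⊕ Fin 1) (Fin 3 ⊕ Fin 1) ℝ)
    (hf : ∀ X i, f X i = se3Mat (w X i) (t X i))
    (v : PC → (Fin N → Matrix (Fin 3 ⊕ Fin 1) (Fin 3 ⊕ Fin 1) ℝ) →
      Fin N → Matrix (Fin 3 ⊕ Fin 1) (Fin 3 ⊕ Fin 1) ℝ)
    (hv : ∀ X g, v X g = fun i => f (act g X) i * g i)
    (r : Matrix (Fin 3) (Fin 3) ℝ) (horth : r * r.transpose = 1) (hdet : r.det = 1)
    (hw : ∀ X i, w (act (fun _ => rotMat r) X) i = r.mulVec (w X i))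
    (ht : ∀ X i, t (act (fun _ => rotMat r) X) i = r.mulVec (t X i)) :
    ∀ X g i, rotMat r * v X g i = v X (fun j => rotMat r * g j) i := by
  intro X g i
  have hactrg : act (fun j => rotMat r * g j) X = act (fun _ => rotMat r) (act g X) :=
    hact _ _ _
  rw [hv, hv]
  simp only [hactrg, hf, hw, ht]
  rw [← Matrix.mul_assoc, rot_se3 r horth hdet, Matrix.mul_assoc]
end

section
/- Let P be a probability distribution on SE(3) × SE(3) conditioned on point clouds (X₁, X₂) that is SO(3)²-equivariant, i.e., P(A | X₁, X₂) = P(A·(g₁⁻¹, g₂⁻¹) | g₁X₁, g₂X₂) for all g₁, g₂ ∈ SO(3), and SO(3)-invariant, i.e., P(A | X₁, X₂) = P(rA | X₁, X₂) for all r ∈ SO(3) acting diagonally on the left. Define P̃(A | X₁, X₂) := P(A × {e} | X₁, X₂) for A ⊆ SE(3). Then P̃ is bi-equivariant: P̃(A | X₁, X₂) = P̃(g₂ A g₁⁻¹ | g₁X₁, g₂X₂) for all g₁, g₂ ∈ SO(3). -/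
/-- Prop. 7: Let `P` be a family of probability set-functions on
`SE(3) × SE(3)` conditioned on point clouds `(X₁, X₂)` that is `SO(3)²`-equivariant,
`P(A | X₁, X₂) = P(A·(g₁⁻¹, g₂⁻¹) | g₁X₁, g₂X₂)`, and `SO(3)`-invariant,
`P(A | X₁, X₂) = P(rA | X₁, X₂)` (diagonal left action).  Define
`P̃(A | X₁, X₂) := P(A × {e} | X₁, X₂)`.  Then `P̃` is bi-equivariant:
`P̃(A | X₁, X₂) = P̃(g₂ A g₁⁻¹ | g₁X₁, g₂X₂)` for all `g₁, g₂ ∈ SO(3)`.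
Here `G` plays the role of `SE(3)` and `K ≤ G` of `SO(3)`. -/
theorem tilde_bi_equivariant
    {G : Type*} [Group G] (K : Subgroup G) {PC : Type*}
    (act : G → PC → PC)
    (P : PC → PC → Set (G × G) → ℝ)
    (hequiv : ∀ g₁ ∈ K, ∀ g₂ ∈ K, ∀ (X₁ X₂ : PC) (A : Set (G × G)),
      P X₁ X₂ A =
        P (act g₁ X₁) (act g₂ X₂) ((fun a : G × G => (a.1 * g₁⁻¹, a.2 * g₂⁻¹)) '' A))
    (hinvar : ∀ r ∈ K, ∀ (X₁ X₂ : PC) (A : Set (G × G)),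
      P X₁ X₂ A = P X₁ X₂ ((fun a : G × G => (r * a.1, r * a.2)) '' A))
    (Pt : PC → PC → Set G → ℝ)
    (hPt : ∀ X₁ X₂ (A : Set G), Pt X₁ X₂ A = P X₁ X₂ (A ×ˢ ({1} : Set G))) :
    ∀ g₁ ∈ K, ∀ g₂ ∈ K, ∀ (X₁ X₂ : PC) (A : Set G),
      Pt X₁ X₂ A =
        Pt (act g₁ X₁) (act g₂ X₂) ((fun a : G => g₂ * a * g₁⁻¹) '' A) := by
  intro g₁ hg₁ g₂ hg₂ X₁ X₂ A
  rw [hPt, hPt, hinvar g₂ hg₂ X₁ X₂, hequiv g₁ hg₁ g₂ hg₂]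
  congr 1
  ext ⟨x, y⟩
  simp only [Set.mem_image, Set.mem_prod, Set.mem_singleton_iff, Prod.mk.injEq,
    Prod.exists]
  constructor
  · rintro ⟨u, v, ⟨a, b, ⟨⟨ha, hb⟩, hu, hv⟩⟩, hx, hy⟩
    subst hb hu hv hx hy
    exact ⟨⟨a, ha, rfl⟩, by group⟩
  · rintro ⟨⟨a, ha, hx⟩, hy⟩
    subst hx hy
    exact ⟨g₂ * a, g₂ * 1, ⟨a, 1, ⟨⟨ha, rfl⟩, rfl, rfl⟩⟩, by group, by group⟩
end

section
/- Let G be a group acting on a set of data, and for each datum X let L(X) = E_{τ, g₀ ~ P₀, g̃₁ ~ P_X} ‖v_X(h_X(τ)) − ∂/∂τ h_X(τ)‖²_F be the flow-matching loss, where h_X is the equivariant path generated by g₀ and g̃₁. Assume P₀ is right-SO(3)^N-invariant, P_X is SO(3)^N-equivariant ((R_{r⁻¹})_# P_X = P_{rX}), the path construction is equivariant (h_{rX} generated by g₀r⁻¹, g̃₁r⁻¹ equals R_{r⁻¹} ∘ h_X), v_X is R_{r⁻¹}-related to v_{rX}, and the differentials of right translations are isometries. Then L(X) = L(rX) for all r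 ∈ SO(3)^N. -/
open MeasureTheory

/-! Right translation by `r⁻¹` in both group coordinates carries `μτ ⊗ P₀ ⊗ P_X` to
`μτ ⊗ P₀ ⊗ P_{rX}`, so `L(rX)` is the integral of the `rX`-integrand composed with that
translation. By equivariance of the path and of the vector field, this composite is the
`X`-integrand with both vectors moved by the isometry `D`, which leaves the norm unchanged. -/

theorem integral_prod_prod_comp_mul_const {G : Type*} [Group G] [MeasurableSpace G]
    [MeasurableMul G] {α E : Type*} [MeasurableSpace α] [NormedAddCommGroup E]
    [NormedSpace ℝ E] (μ : Measure α) [SFinite μ] {ν ν' ρ ρ' : Measure G} [SFinite ν]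
    [SFinite ρ] (g : G) (hν : ν.map (· * g) = ν') (hρ : ρ.map (· * g) = ρ')
    (F : α × G × G → E) :
    ∫ p, F (p.1, p.2.1 * g, p.2.2 * g) ∂(μ.prod (ν.prod ρ)) =
      ∫ p, F p ∂(μ.prod (ν'.prod ρ')) := by
  let T : α × G × G ≃ᵐ α × G × G :=
    (MeasurableEquiv.refl α).prodCongr
      ((MeasurableEquiv.mulRight g).prodCongr (MeasurableEquiv.mulRight g))
  have hT : MeasurePreserving T (μ.prod (ν.prod ρ)) (μ.prod (ν'.prod ρ')) :=
    (MeasurePreserving.id μ).prod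
      ((⟨measurable_mul_const g, hν⟩ : MeasurePreserving (· * g) ν ν').prod
        ⟨measurable_mul_const g, hρ⟩)
  exact hT.integral_comp' F

theorem loss_rotation_invariance_general
    {G : Type*} [Group G] [MeasurableSpace G] [MeasurableMul G]
    {PC : Type*} [MulAction G PC]
    {E : Type*} [NormedAddCommGroup E] [NormedSpace ℝ E]
    (r : G) (X : PC)
    (P₀ : Measure G) [IsProbabilityMeasure P₀]
    (PX : PC → Measure G) [∀ Y, IsProbabilityMeasure (PX Y)]
    (μτ : Measure ℝ) [IsProbabilityMeasure μτ]
    (h : PC → ℝ → G → G → G) (dh : PC → ℝ → G → G → E) (v : PC → G → E)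
    (D : E ≃ₗᵢ[ℝ] E)
    (hP₀ : Measure.map (fun g => g * r⁻¹) P₀ = P₀)
    (hPX : Measure.map (fun g => g * r⁻¹) (PX X) = PX (r • X))
    (hpath : ∀ τ g₀ g₁, h (r • X) τ (g₀ * r⁻¹) (g₁ * r⁻¹) = h X τ g₀ g₁ * r⁻¹)
    (hvel : ∀ τ g₀ g₁, dh (r • X) τ (g₀ * r⁻¹) (g₁ * r⁻¹) = D (dh X τ g₀ g₁))
    (hrel : ∀ g, v (r • X) (g * r⁻¹) = D (v X g)) :
    ∫ p : ℝ × G × G, ‖v X (h X p.1 p.2.1 p.2.2) - dh X p.1 p.2.1 p.2.2‖ ^ 2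
        ∂(μτ.prod (P₀.prod (PX X))) =
    ∫ p : ℝ × G × G,
        ‖v (r • X) (h (r • X) p.1 p.2.1 p.2.2) - dh (r • X) p.1 p.2.1 p.2.2‖ ^ 2
        ∂(μτ.prod (P₀.prod (PX (r • X)))) := by
  have hD : ∀ a b : E, ‖D a - D b‖ = ‖a - b‖ := fun a b => by rw [← map_sub, D.norm_map]
  rw [← integral_prod_prod_comp_mul_const μτ r⁻¹ hP₀ hPX]
  simp only [hpath, hvel, hrel, hD]

/-- first part of Prop. 5, data efficiency: Let `G = SE(3)^N` act on data,
`r ∈ SO(3)^N ⊆ G`, and let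
`L(X) = E_{τ, g₀ ~ P₀, g̃₁ ~ P_X} ‖v_X (h_X τ g₀ g̃₁) − ∂/∂τ h_X τ g₀ g̃₁‖²`
be the flow-matching loss, the velocity `dh X τ g₀ g̃₁` being the path derivative.
Assume: `P₀` is right-invariant under `r`; `P_X` is equivariant
(`(R_{r⁻¹})_# P_X = P_{r X}`); the path construction is equivariant
(`h_{rX}` generated from `g₀ r⁻¹, g̃₁ r⁻¹` equals `R_{r⁻¹} ∘ h_X`, and likewise for its
velocity via the differential `D = (R_{r⁻¹})_*`); `v_X` is `R_{r⁻¹}`-related to `v_{rX}`;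
and `D` is a linear isometry.  Then `L(X) = L(r X)`. -/
theorem loss_rotation_invariance
    {G : Type*} [Group G] [MeasurableSpace G] [MeasurableMul G]
    {PC : Type*} [MulAction G PC]
    {E : Type*} [NormedAddCommGroup E] [NormedSpace ℝ E]
    (r : G) (X : PC)
    (P₀ : Measure G) [IsProbabilityMeasure P₀]
    (PX : PC → Measure G) [∀ Y, IsProbabilityMeasure (PX Y)]
    (μτ : Measure ℝ) [IsProbabilityMeasure μτ]
    (h : PC → ℝ → G → G → G) (dh : PC → ℝ → G → G → E) (v : PC → G → E)
    (D : E ≃ₗᵢ[ℝ] E)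
    (hP₀ : Measure.map (fun g => g * r⁻¹) P₀ = P₀)
    (hPX : Measure.map (fun g => g * r⁻¹) (PX X) = PX (r • X))
    (hpath : ∀ τ g₀ g₁, h (r • X) τ (g₀ * r⁻¹) (g₁ * r⁻¹) = h X τ g₀ g₁ * r⁻¹)
    (hvel : ∀ τ g₀ g₁, dh (r • X) τ (g₀ * r⁻¹) (g₁ * r⁻¹) = D (dh X τ g₀ g₁))
    (hrel : ∀ g, v (r • X) (g * r⁻¹) = D (v X g))
    (hmeas : ∀ Y : PC, Measurable (fun p : ℝ × G × G =>
      ‖v Y (h Y p.1 p.2.1 p.2.2) - dh Y p.1 p.2.1 p.2.2‖ ^ 2)) :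
    ∫ p : ℝ × G × G, ‖v X (h X p.1 p.2.1 p.2.2) - dh X p.1 p.2.1 p.2.2‖ ^ 2
        ∂(μτ.prod (P₀.prod (PX X))) =
    ∫ p : ℝ × G × G,
        ‖v (r • X) (h (r • X) p.1 p.2.1 p.2.2) - dh (r • X) p.1 p.2.1 p.2.2‖ ^ 2
        ∂(μτ.prod (P₀.prod (PX (r • X)))) :=
  loss_rotation_invariance_general r X P₀ PX μτ h dh v D hP₀ hPX hpath hvel hrel
end
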